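/- Let k=2^n and π_n the bit-reversal permutation. Then J_1(k) = ∑_{j=0}^{k−1} j·π_n(j) = k³/4 + (n−4)k²/8 + k/4. -/

import Mathlib

/-!
Splitting `[0, 2^(n+1))` into even and odd `j` gives `π_{n+1}(2q) = π_n(q)` and
`π_{n+1}(2q+1) = 2^n + π_n(q)`, so with `k = 2^n` the sums `T(n) = ∑ π_n(j)` and
`J(n) = ∑ j π_n(j)` satisfy `T(n+1) = k^2 + 2 T(n)` and `J(n+1) = 4 J(n) + T(n) + k^3`.
Induction on `n` then gives `2 T(n) + k = k^2` and the closed form of `J(n)`.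
-/

/-- The bit-reversal permutation on `n` bits: reverses the binary digits of `j`. -/
def bitrev (n j : ℕ) : ℕ := ∑ i ∈ Finset.range n, (j / 2 ^ i % 2) * 2 ^ (n - 1 - i)

open Finset

theorem Finset.sum_range_two_mul {M : Type*} [AddCommMonoid M] (m : ℕ) (f : ℕ → M) :
    ∑ j ∈ range (2 * m), f j = ∑ q ∈ range m, (f (2 * q) + f (2 * q + 1)) := by
  induction m with
  | zero => simp
  | succ m ih =>
    rw [show 2 * (m + 1) = 2 * m + 1 + 1 by ring, sum_range_succ, sum_range_succ, ih,
      sum_range_succ, add_assoc]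

theorem Finset.sum_range_two_mul_add_one (m : ℕ) :
    ∑ q ∈ range m, (2 * q + 1) = m * m := by
  induction m with
  | zero => simp
  | succ m ih => rw [sum_range_succ, ih]; ring

@[simp]
theorem bitrev_zero (j : ℕ) : bitrev 0 j = 0 := rfl

theorem bitrev_succ (n j : ℕ) : bitrev (n + 1) j = j % 2 * 2 ^ n + bitrev n (j / 2) := by
  rw [bitrev, sum_range_succ', add_comm]
  congr 1
  · simp
  · refine sum_congr rfl fun i _ => ?_
    rw [Nat.div_div_eq_div_mul, ← pow_succ', show n + 1 - 1 - (i + 1) = n - 1 - i by omega]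

theorem bitrev_two_mul (n q : ℕ) : bitrev (n + 1) (2 * q) = bitrev n q := by
  simp [bitrev_succ]

theorem bitrev_two_mul_add_one (n q : ℕ) : bitrev (n + 1) (2 * q + 1) = 2 ^ n + bitrev n q := by
  rw [bitrev_succ, Nat.mul_add_mod_self_left, Nat.mul_add_div two_pos]
  simp

theorem two_mul_sum_bitrev_add (n : ℕ) :
    2 * ∑ j ∈ range (2 ^ n), bitrev n j + 2 ^ n = 2 ^ n * 2 ^ n := by
  induction n with
  | zero => simp
  | succ n ih =>
    have hstep : ∑ j ∈ range (2 ^ (n + 1)), bitrev (n + 1) j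
        = 2 ^ n * 2 ^ n + 2 * ∑ q ∈ range (2 ^ n), bitrev n q := by
      simp only [pow_succ', sum_range_two_mul, bitrev_two_mul, bitrev_two_mul_add_one,
        sum_add_distrib, sum_const, card_range, smul_eq_mul]
      ring
    rw [hstep, pow_succ']
    linarith

-- `J(n)` with the denominators cleared and `4 k^2` moved left, as `n - 4` truncates in `ℕ`.
theorem eight_mul_sum_mul_bitrev_add (n : ℕ) :
    8 * ∑ j ∈ range (2 ^ n), j * bitrev n j + 4 * (2 ^ n) ^ 2
      = 2 * (2 ^ n) ^ 3 + n * (2 ^ n) ^ 2 + 2 * 2 ^ n := by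
  induction n with
  | zero => simp
  | succ n ih =>
    have hstep : ∑ j ∈ range (2 ^ (n + 1)), j * bitrev (n + 1) j
        = 4 * ∑ q ∈ range (2 ^ n), q * bitrev n q + ∑ q ∈ range (2 ^ n), bitrev n q
          + (2 ^ n) ^ 3 := by
      calc ∑ j ∈ range (2 ^ (n + 1)), j * bitrev (n + 1) j
          = ∑ q ∈ range (2 ^ n), (4 * (q * bitrev n q) + bitrev n q + (2 * q + 1) * 2 ^ n) := by
            rw [pow_succ', sum_range_two_mul]
            refine sum_congr rfl fun q _ => ?_
            rw [bitrev_two_mul, bitrev_two_mul_add_one]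
            ring
        _ = _ := by
            rw [sum_add_distrib, sum_add_distrib, ← mul_sum, ← sum_mul,
              sum_range_two_mul_add_one]
            ring
    have hT := two_mul_sum_bitrev_add n
    rw [hstep, pow_succ 2 n]
    linarith

theorem J1_bitrev (n k : ℕ) (hk : k = 2 ^ n) :
    ((∑ j ∈ Finset.range k, j * bitrev n j : ℕ) : ℝ)
      = (k : ℝ) ^ 3 / 4 + ((n : ℝ) - 4) * (k : ℝ) ^ 2 / 8 + (k : ℝ) / 4 := by
  subst hk
  have h := congrArg (fun m : ℕ => (m : ℝ)) (eight_mul_sum_mul_bitrev_add n)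
  push_cast at h ⊢
  linarith
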